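/- With W_n and M as above, M(reverse(W_n)) = [[X_n - X_{n-1}^2, 1 - X̃_n],[X_{n-1}^2, X̃_n]] for all n ≥ 1. -/

import Mathlib

/-!
Write `P_k = ∏_{i=1}^k x_i^{2^(k-i)}` (`Xterm`), so that `X_k = X_{k-1} + P_k`, `X̃_k = X_{k-1} - P_k`
and `P_{k+1} = x_{k+1} P_k²`. Since `reverse W_{k+1} = W_k ⬝ (-x_{k+1}, x_{k+1}) ⬝ reverse W_k`, the
words `W_n` and `reverse W_n` differ only in the sign of the middle letter pair, and by induction
`M(W_n) = S(X_{n-1}, P_n)` and `M(reverse W_n) = S(X_{n-1}, -P_n)`, where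
`S(Y, P) = [[Y - P - Y², 1 - Y - P], [Y², Y + P]]` (`paperfoldMatrix`). The induction step is the
single `2 × 2` identity `S(Y, P) · M(t, -t) · S(Y, -P) = S(Y + P, t P²)`.
-/

variable {R : Type*} [CommRing R]

/-- `X k = 1 + ∑_{j=1}^k ∏_{i=1}^j x_i^{2^(j-i)}`. -/
def Xpoly (x : ℕ → R) (k : ℕ) : R :=
  1 + ∑ j ∈ Finset.Icc 1 k, ∏ i ∈ Finset.Icc 1 j, x i ^ 2 ^ (j - i)

/-- `X̃ k = 1 + ∑_{j=1}^{k-1} ∏_{i=1}^j x_i^{2^(j-i)} - ∏_{i=1}^k x_i^{2^(k-i)}`. -/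
def Xtilde (x : ℕ → R) (k : ℕ) : R :=
  1 + ∑ j ∈ Finset.Icc 1 (k - 1), ∏ i ∈ Finset.Icc 1 j, x i ^ 2 ^ (j - i)
    - ∏ i ∈ Finset.Icc 1 k, x i ^ 2 ^ (k - i)

/-- The paperfolding words: `W 1 = (-x₁, x₁)`, `W (k+1) = W k ⬝ (x_{k+1}, -x_{k+1}) ⬝ reverse (W k)`. -/
def Wword (x : ℕ → R) : ℕ → List R
  | 0 => []
  | 1 => [-x 1, x 1]
  | (k + 2) => Wword x (k + 1) ++ [x (k + 2), -x (k + 2)] ++ (Wword x (k + 1)).reverse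

/-- `M(U)`: the ordered product of the matrices `[[0,u],[1,1]]` over the letters `u` of `U`. -/
def Mword (U : List R) : Matrix (Fin 2) (Fin 2) R :=
  (U.map fun u => !![0, u; 1, 1]).prod

def Xterm (x : ℕ → R) (k : ℕ) : R := ∏ i ∈ Finset.Icc 1 k, x i ^ 2 ^ (k - i)

lemma Xterm_succ (x : ℕ → R) (k : ℕ) : Xterm x (k + 1) = x (k + 1) * Xterm x k ^ 2 := by
  rw [Xterm, Finset.prod_Icc_succ_top (by omega), Nat.sub_self, pow_zero, pow_one, mul_comm,
    Xterm, ← Finset.prod_pow]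
  congr 1
  refine Finset.prod_congr rfl fun i hi => ?_
  rw [← pow_mul, ← pow_succ, Nat.sub_add_comm (Finset.mem_Icc.1 hi).2]

lemma Xpoly_succ (x : ℕ → R) (k : ℕ) : Xpoly x (k + 1) = Xpoly x k + Xterm x (k + 1) := by
  rw [Xpoly, Finset.sum_Icc_succ_top (by omega), ← add_assoc, Xpoly, Xterm]

lemma Xtilde_eq_sub (x : ℕ → R) (k : ℕ) : Xtilde x k = Xpoly x (k - 1) - Xterm x k := rfl

lemma Mword_append (U V : List R) : Mword (U ++ V) = Mword U * Mword V := by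
  simp [Mword]

lemma Mword_pair (a b : R) : Mword [a, b] = !![0, a; 1, 1] * !![0, b; 1, 1] := by
  simp [Mword]

lemma Wword_succ (x : ℕ → R) {k : ℕ} (hk : 1 ≤ k) :
    Wword x (k + 1) = Wword x k ++ [x (k + 1), -x (k + 1)] ++ (Wword x k).reverse := by
  obtain ⟨m, rfl⟩ := Nat.exists_eq_add_of_le' hk
  rfl

lemma reverse_Wword_succ (x : ℕ → R) {k : ℕ} (hk : 1 ≤ k) :
    (Wword x (k + 1)).reverse = Wword x k ++ [-x (k + 1), x (k + 1)] ++ (Wword x k).reverse := by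
  simp [Wword_succ x hk]

def paperfoldMatrix (Y P : R) : Matrix (Fin 2) (Fin 2) R :=
  !![Y - P - Y ^ 2, 1 - Y - P; Y ^ 2, Y + P]

lemma paperfoldMatrix_mul_pair_mul (Y P t : R) :
    paperfoldMatrix Y P * Mword [t, -t] * paperfoldMatrix Y (-P) =
      paperfoldMatrix (Y + P) (t * P ^ 2) := by
  simp only [Mword_pair, paperfoldMatrix, Matrix.mul_fin_two]
  ring_nf

lemma Mword_Wword_and_reverse (x : ℕ → R) {n : ℕ} (hn : 1 ≤ n) :
    Mword (Wword x n) = paperfoldMatrix (Xpoly x (n - 1)) (Xterm x n) ∧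
      Mword (Wword x n).reverse = paperfoldMatrix (Xpoly x (n - 1)) (-Xterm x n) := by
  induction n, hn using Nat.le_induction with
  | base =>
    constructor <;> simp [Wword, Mword_pair, paperfoldMatrix, Xpoly, Xterm] <;> ring_nf
  | succ k hk ih =>
    obtain ⟨hW, hWrev⟩ := ih
    have hX : Xpoly x (k - 1) + Xterm x k = Xpoly x k := by
      obtain ⟨m, rfl⟩ := Nat.exists_eq_add_of_le' hk
      exact (Xpoly_succ x m).symm
    rw [reverse_Wword_succ x hk, Wword_succ x hk, Nat.add_sub_cancel, Xterm_succ, ← hX]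
    simp only [Mword_append, hW, hWrev]
    refine ⟨paperfoldMatrix_mul_pair_mul _ _ _, ?_⟩
    simpa using paperfoldMatrix_mul_pair_mul (Xpoly x (k - 1)) (Xterm x k) (-x (k + 1))

/-- `M(reverse W_n) = [[X_n - X_{n-1}², 1 - X̃_n],[X_{n-1}², X̃_n]]`. -/
theorem Mword_Wword_reverse (x : ℕ → R) (n : ℕ) (hn : 1 ≤ n) :
    Mword (Wword x n).reverse =
      !![Xpoly x n - Xpoly x (n - 1) ^ 2, 1 - Xtilde x n;
         Xpoly x (n - 1) ^ 2, Xtilde x n] := by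
  obtain ⟨m, rfl⟩ := Nat.exists_eq_add_of_le' hn
  rw [(Mword_Wword_and_reverse x hn).2, Xtilde_eq_sub, Xpoly_succ, paperfoldMatrix]
  simp only [Nat.add_sub_cancel]
  ring_nf
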